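/- Suppose there exist a unit vector u ∈ ℝ^p and a ∈ ℝ such that for i = 0,1 the conditional input law P_i gives probability one to the hyperplane { x : uᵀx = a }. Then for every s > 0, taking the trigger η = s·u, every measurable f : ℝ^p → [0,1] and every loss ℓ : [0,1]² → [0,∞) satisfy ℓ^cl(f) ≤ (1−ρ)^{-1} ℓ^poi(f) and ℓ^bd(f) ≤ ρ^{-1} ℓ^poi(f). In particular, if in addition the poisoned risk is of the same order as the clean model's risk, the backdoor attack with arbitrarily small trigger magnitude s is successful. -/

import Mathlib

/-!
Both conditional laws live on the hyperplane `H = {x | ⟪u, x⟫ = a}`, so the clean law `μcl` is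
carried by `H` while the backdoor law `μbd` is carried by the parallel hyperplane `H + s • u`:
the two are mutually singular. Comparing the defining identity of `fpoi` with that of `fcl` on
sets inside either hyperplane shows `fpoi = fcl` `μcl`-a.e. and `fpoi = 0` `μbd`-a.e., so the
poisoned risk is exactly `(1 - ρ) ℓ^cl(f) + ρ ℓ^bd(f)`, which dominates each summand.
-/

open MeasureTheory
open scoped RealInnerProductSpace ENNReal

namespace MeasureTheory

variable {α : Type*} [MeasurableSpace α]

lemma integrable_of_forall_mem_Icc {μ : Measure α} [IsFiniteMeasure μ] {g : α → ℝ}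
    (hg : Measurable g) (h01 : ∀ x, g x ∈ Set.Icc (0 : ℝ) 1) : Integrable g μ :=
  .of_bound hg.aestronglyMeasurable 1 <| .of_forall fun x => by
    rw [Real.norm_eq_abs, abs_of_nonneg (h01 x).1]
    exact (h01 x).2

instance isFiniteMeasure_ofReal_smul {μ : Measure α} [IsFiniteMeasure μ] (r : ℝ) :
    IsFiniteMeasure (ENNReal.ofReal r • μ) :=
  μ.smul_finite ENNReal.ofReal_ne_top

lemma setIntegral_smul_add_smul_measure {μ ν : Measure α} {c d : ℝ≥0∞} (hc : c ≠ ∞)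
    (hd : d ≠ ∞) {g : α → ℝ} (hμ : Integrable g μ) (hν : Integrable g ν) (A : Set α) :
    ∫ x in A, g x ∂(c • μ + d • ν) =
      c.toReal * ∫ x in A, g x ∂μ + d.toReal * ∫ x in A, g x ∂ν := by
  rw [Measure.restrict_add, Measure.restrict_smul, Measure.restrict_smul,
    integral_add_measure (hμ.restrict.smul_measure hc) (hν.restrict.smul_measure hd),
    integral_smul_measure, integral_smul_measure, smul_eq_mul, smul_eq_mul]

namespace Measure.MutuallySingular

lemma ae_eq_of_forall_setIntegral_add_eq {μ ν : Measure α} (hμν : μ ⟂ₘ ν) {c d : ℝ}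
    (hc : c ≠ 0) {g h k : α → ℝ} (hg : Integrable g μ) (hh : Integrable h μ)
    (hgh : ∀ A, MeasurableSet A →
      c * ∫ x in A, g x ∂μ + d * ∫ x in A, g x ∂ν = c * ∫ x in A, h x ∂μ + d * ∫ x in A, k x ∂ν) :
    g =ᵐ[μ] h := by
  set S := hμν.nullSet
  have hμS : μ.restrict Sᶜ = μ :=
    Measure.restrict_eq_self_of_ae_mem (compl_mem_ae_iff.mpr hμν.measure_nullSet)
  rw [← hμS]
  refine hg.restrict.ae_eq_of_forall_setIntegral_eq _ _ hh.restrict fun A hA _ => ?_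
  have hνA : ν (A ∩ Sᶜ) = 0 :=
    measure_mono_null Set.inter_subset_right hμν.measure_compl_nullSet
  have hAS := hgh _ (hA.inter hμν.measurableSet_nullSet.compl)
  rw [setIntegral_measure_zero _ hνA, setIntegral_measure_zero _ hνA] at hAS
  rw [Measure.restrict_restrict hA]
  simpa [hc] using hAS

lemma ae_eq_and_ae_eq_zero_of_forall_setIntegral_eq {μ ν : Measure α} (hμν : μ ⟂ₘ ν) {c d : ℝ}
    (hc : 0 < c) (hd : 0 < d) {g h : α → ℝ} (hgμ : Integrable g μ) (hgν : Integrable g ν)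
    (hh : Integrable h μ)
    (hgh : ∀ A, MeasurableSet A →
      ∫ x in A, g x ∂(ENNReal.ofReal c • μ + ENNReal.ofReal d • ν) = c * ∫ x in A, h x ∂μ) :
    g =ᵐ[μ] h ∧ g =ᵐ[ν] 0 := by
  have hsplit : ∀ A, MeasurableSet A →
      c * ∫ x in A, g x ∂μ + d * ∫ x in A, g x ∂ν =
        c * ∫ x in A, h x ∂μ + d * ∫ x in A, (0 : ℝ) ∂ν := fun A hA => by
    rw [← hgh A hA, setIntegral_smul_add_smul_measure ENNReal.ofReal_ne_top ENNReal.ofReal_ne_top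
      hgμ hgν, ENNReal.toReal_ofReal hc.le, ENNReal.toReal_ofReal hd.le]
    simp
  exact ⟨hμν.ae_eq_of_forall_setIntegral_add_eq hc.ne' hgμ hh hsplit,
    hμν.symm.ae_eq_of_forall_setIntegral_add_eq hd.ne' hgν (integrable_zero _ _ _)
      fun A hA => by simpa [add_comm] using hsplit A hA⟩

end Measure.MutuallySingular

lemma lintegral_le_inv_mul_lintegral_smul_add_of_ae_eq {μ ν : Measure α} {c : ℝ≥0∞}
    (hc0 : c ≠ 0) (hc : c ≠ ∞) {F G : α → ℝ≥0∞} (hFG : F =ᵐ[μ] G) :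
    ∫⁻ x, G x ∂μ ≤ c⁻¹ * ∫⁻ x, F x ∂(c • μ + ν) := by
  rw [← ENNReal.mul_le_iff_le_inv hc0 hc, lintegral_add_measure, lintegral_smul_measure,
    smul_eq_mul, lintegral_congr_ae hFG]
  exact le_self_add

end MeasureTheory

lemma mutuallySingular_map_add_const_of_ae_inner_eq {E : Type*} [NormedAddCommGroup E]
    [InnerProductSpace ℝ E] [MeasurableSpace E] [BorelSpace E] {μ : Measure E} {u v : E} {a : ℝ}
    (hμ : ∀ᵐ x ∂μ, ⟪u, x⟫ = a) (huv : ⟪u, v⟫ ≠ 0) : μ ⟂ₘ μ.map (· + v) := by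
  have hH : MeasurableSet {x : E | ⟪u, x⟫ = a} :=
    measurableSet_eq_fun (continuous_const.inner continuous_id).measurable measurable_const
  have hμ0 : μ {x | ⟪u, x⟫ = a}ᶜ = 0 := ae_iff.mp hμ
  refine ⟨{x | ⟪u, x⟫ = a}ᶜ, hH.compl, hμ0, ?_⟩
  rw [compl_compl, Measure.map_apply (continuous_add_const v).measurable hH]
  refine measure_mono_null (fun x hx => ?_) hμ0
  simp only [Set.mem_preimage, Set.mem_compl_iff, Set.mem_ofPred_eq, inner_add_right] at hx ⊢
  exact fun hxa => huv (by linarith)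

theorem degenerate_support_attack {p : ℕ}
    (P0 P1 : Measure (EuclideanSpace ℝ (Fin p)))
    [IsProbabilityMeasure P0] [IsProbabilityMeasure P1]
    (lam ρ : ℝ) (hρ : ρ ∈ Set.Ioo (0:ℝ) 1)
    (u : EuclideanSpace ℝ (Fin p)) (hu : ‖u‖ = 1) (a : ℝ)
    (hP0 : P0 {x | ⟪u, x⟫ = a} = 1) (hP1 : P1 {x | ⟪u, x⟫ = a} = 1)
    (s : ℝ) (hs : 0 < s)
    (μcl μbd μpoi : Measure (EuclideanSpace ℝ (Fin p)))
    (hμcl : μcl = ENNReal.ofReal lam • P1 + ENNReal.ofReal (1 - lam) • P0)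
    (hμbd : μbd = μcl.map (fun x => x + s • u))
    (hμpoi : μpoi = ENNReal.ofReal (1 - ρ) • μcl + ENNReal.ofReal ρ • μbd)
    (fcl fpoi : EuclideanSpace ℝ (Fin p) → ℝ)
    (hfclmeas : Measurable fcl) (hfcl01 : ∀ x, fcl x ∈ Set.Icc (0:ℝ) 1)
    (hfpoimeas : Measurable fpoi) (hfpoi01 : ∀ x, fpoi x ∈ Set.Icc (0:ℝ) 1)
    (hfcl : ∀ A : Set (EuclideanSpace ℝ (Fin p)), MeasurableSet A →
      lam * (P1 A).toReal = ∫ x in A, fcl x ∂μcl)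
    (hfpoi : ∀ A : Set (EuclideanSpace ℝ (Fin p)), MeasurableSet A →
      (1 - ρ) * lam * (P1 A).toReal = ∫ x in A, fpoi x ∂μpoi)
    (ℓ : ℝ → ℝ → ℝ)
    (f : EuclideanSpace ℝ (Fin p) → ℝ) :
    (∫⁻ x, ENNReal.ofReal (ℓ (f x) (fcl x)) ∂μcl) ≤
        (ENNReal.ofReal (1 - ρ))⁻¹ * ∫⁻ x, ENNReal.ofReal (ℓ (f x) (fpoi x)) ∂μpoi ∧
      (∫⁻ x, ENNReal.ofReal (ℓ (f x) 0) ∂μbd) ≤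
        (ENNReal.ofReal ρ)⁻¹ * ∫⁻ x, ENNReal.ofReal (ℓ (f x) (fpoi x)) ∂μpoi := by
  obtain ⟨hρ0, hρ1⟩ := hρ
  have hH : MeasurableSet {x : EuclideanSpace ℝ (Fin p) | ⟪u, x⟫ = a} :=
    measurableSet_eq_fun (continuous_const.inner continuous_id).measurable measurable_const
  have hcl_H : ∀ᵐ x ∂μcl, ⟪u, x⟫ = a := by
    rw [hμcl, ae_add_measure_iff]
    exact ⟨Measure.ae_smul_measure ((mem_ae_iff_prob_eq_one hH).mpr hP1) _,
      Measure.ae_smul_measure ((mem_ae_iff_prob_eq_one hH).mpr hP0) _⟩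
  have hsing : μcl ⟂ₘ μbd := hμbd ▸ mutuallySingular_map_add_const_of_ae_inner_eq hcl_H
    (by simp [real_inner_smul_right, hu, hs.ne'])
  have : IsFiniteMeasure μcl := hμcl ▸ inferInstance
  have : IsFiniteMeasure μbd := hμbd ▸ inferInstance
  obtain ⟨hcl, hbd⟩ := hsing.ae_eq_and_ae_eq_zero_of_forall_setIntegral_eq (sub_pos.mpr hρ1) hρ0
    (integrable_of_forall_mem_Icc hfpoimeas hfpoi01)
    (integrable_of_forall_mem_Icc hfpoimeas hfpoi01)
    (integrable_of_forall_mem_Icc hfclmeas hfcl01) fun A hA => by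
      rw [← hμpoi, ← hfpoi A hA, ← hfcl A hA, mul_assoc]
  rw [hμpoi]
  refine ⟨?_, add_comm (ENNReal.ofReal (1 - ρ) • μcl) _ ▸ ?_⟩
  · exact lintegral_le_inv_mul_lintegral_smul_add_of_ae_eq (by simpa using hρ1)
      ENNReal.ofReal_ne_top (hcl.mono fun x hx => by simp only [hx])
  · exact lintegral_le_inv_mul_lintegral_smul_add_of_ae_eq (by simpa using hρ0)
      ENNReal.ofReal_ne_top (hbd.mono fun x hx => by simp only [hx, Pi.zero_apply])
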